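/- arXiv:0911.5389 — 4 statements merged into one kernel-verified Lean document; each statement's English description precedes it below -/
import Mathlib

section
/- Residue cancellation at colors 1,…,r: Assume the Bethe ansatz equations hold. Then for every d with 1 ≤ d ≤ r and every k ∈ {1,…,N_d}, the residue of z(d;u) + z(d+1;u) at u = −d + u_k^{(d)} vanishes; that is, lim_{u → −d + u_k^{(d)}} (u + d − u_k^{(d)})·(z(d;u) + z(d+1;u)) = 0. -/
open Complex Filter Topology

namespace AnalyticBethe

/-- The data of the analytic Bethe ansatz for `sl(r+1|s+1)`:
a generic deformation parameter `q` (with a fixed logarithm `Lq`),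
Bethe roots `root a j` of each color `a ∈ {1,…,r+s+1}` (0-indexed here),
and inhomogeneities `w j` together with the parameters `bw j` (the `(r+1)`-th
Kac–Dynkin labels of the quantum space) at each of `L` sites. -/
structure Setup (r s : ℕ) where
  q : ℂ
  Lq : ℂ
  hexp : Complex.exp Lq = q
  hq0 : q ≠ 0
  hgen : ∀ n : ℕ, 0 < n → q ^ n ≠ 1
  Nb : Fin (r + s + 1) → ℕ
  root : (a : Fin (r + s + 1)) → Fin (Nb a) → ℂ
  L : ℕ
  w : Fin L → ℂ
  bw : Fin L → ℂ

variable {r s : ℕ}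

/-- The `q`-number `[u] = (q^u - q^{-u})/(q - q⁻¹)`. -/
noncomputable def Setup.br (S : Setup r s) (u : ℂ) : ℂ :=
  (Complex.exp (u * S.Lq) - Complex.exp (-(u * S.Lq))) / (S.q - S.q⁻¹)

/-- `Q_a(u) = ∏_j [u - u_j^{(a)}]` for `1 ≤ a ≤ r+s+1`, and `Q_0 = Q_{r+s+2} = 1`. -/
noncomputable def Setup.Q (S : Setup r s) (a : ℕ) (u : ℂ) : ℂ :=
  if h : 1 ≤ a ∧ a ≤ r + s + 1 then
    have ha : a - 1 < r + s + 1 := by omega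
    ∏ j : Fin (S.Nb ⟨a - 1, ha⟩), S.br (u - S.root ⟨a - 1, ha⟩ j)
  else 1

/-- The vacuum parts `ψ_a(u)`. -/
noncomputable def Setup.psi (S : Setup r s) (a : ℕ) (u : ℂ) : ℂ :=
  if a ≤ r + 1 then 1
  else ∏ j : Fin S.L,
    S.br (u - S.w j + (r : ℂ) + 1 - S.bw j) / S.br (u - S.w j + (r : ℂ) + 1 + S.bw j)

/-- The functions `z(a;u)`, `a ∈ J = {1,…,r+s+2}`. -/
noncomputable def Setup.z (S : Setup r s) (a : ℕ) (u : ℂ) : ℂ :=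
  if a ≤ r + 1 then
    S.psi a u * S.Q (a - 1) (u + (a : ℂ) + 1) * S.Q a (u + (a : ℂ) - 2) /
      (S.Q (a - 1) (u + (a : ℂ) - 1) * S.Q a (u + (a : ℂ)))
  else
    S.psi a u * S.Q (a - 1) (u + 2 * (r : ℂ) - (a : ℂ) + 1) *
        S.Q a (u + 2 * (r : ℂ) - (a : ℂ) + 4) /
      (S.Q (a - 1) (u + 2 * (r : ℂ) - (a : ℂ) + 3) *
        S.Q a (u + 2 * (r : ℂ) - (a : ℂ) + 2))

/-- The denominator of `z(a;u)` coming from the `Q`-functions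
(the vacuum parts `ψ` are disregarded). -/
noncomputable def Setup.zDen (S : Setup r s) (a : ℕ) (u : ℂ) : ℂ :=
  if a ≤ r + 1 then S.Q (a - 1) (u + (a : ℂ) - 1) * S.Q a (u + (a : ℂ))
  else S.Q (a - 1) (u + 2 * (r : ℂ) - (a : ℂ) + 3) *
       S.Q a (u + 2 * (r : ℂ) - (a : ℂ) + 2)

/-- The bilinear pairing `(α_a|α_b)` of the distinguished simple roots of `sl(r+1|s+1)`. -/
def cartan (r : ℕ) (a b : ℕ) : ℤ :=
  if a = b then (if a ≤ r then 2 else if a = r + 1 then 0 else -2)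
  else if b = a + 1 ∨ a = b + 1 then (if min a b ≤ r then -1 else 1)
  else 0

/-- The Bethe ansatz equations (BAE).  Here the color `a ∈ {1,…,r+s+1}` is represented
by `a.1 + 1` for `a : Fin (r+s+1)`; `t_a = 1` for `a ≤ r+1` and `t_a = -1` otherwise,
and the Kac–Dynkin labels of the quantum space are `b_j^{(a)} = δ_{a,r+1}·bw j`. -/
def Setup.BAE (S : Setup r s) : Prop :=
  ∀ (a : Fin (r + s + 1)) (k : Fin (S.Nb a)),
    -(∏ j : Fin S.L,
        S.br (S.root a k - S.w j +
          (if a.1 + 1 = r + 1 then (1 : ℂ) else 0) * S.bw j /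
            (if a.1 + 1 ≤ r + 1 then (1 : ℂ) else -1)) /
        S.br (S.root a k - S.w j -
          (if a.1 + 1 = r + 1 then (1 : ℂ) else 0) * S.bw j /
            (if a.1 + 1 ≤ r + 1 then (1 : ℂ) else -1)))
    = (-1 : ℂ) ^ (if a.1 + 1 = r + 1 then 1 else 0) *
      ∏ b : Fin (r + s + 1),
        S.Q (b.1 + 1) (S.root a k + (cartan r (a.1 + 1) (b.1 + 1) : ℂ)) /
          S.Q (b.1 + 1) (S.root a k - (cartan r (a.1 + 1) (b.1 + 1) : ℂ))

/-- Genericity of the Bethe roots: each `Q_a` has a simple zero at each Bethe root of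
color `a`, and no `Q_b` vanishes at any other integral shift of a Bethe root; hence all
potential poles arising from zeros of `Q`-functions in denominators are simple. -/
def Setup.Generic (S : Setup r s) : Prop :=
  (∀ (a : Fin (r + s + 1)) (k : Fin (S.Nb a)),
      deriv (S.Q (a.1 + 1)) (S.root a k) ≠ 0) ∧
  (∀ (a : Fin (r + s + 1)) (k : Fin (S.Nb a)) (b : ℕ) (m : ℤ),
      1 ≤ b → b ≤ r + s + 1 → (b ≠ a.1 + 1 ∨ m ≠ 0) →
      S.Q b (S.root a k + (m : ℂ)) ≠ 0)

/-- A Young diagram, presented as an antitone, eventually-zero sequence of row lengths.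
`part i` is the length `μ_{i+1}` of the `(i+1)`-th row (0-indexed). -/
structure YD where
  part : ℕ → ℕ
  len : ℕ
  anti : ∀ ⦃i j : ℕ⦄, i ≤ j → part j ≤ part i
  zero : ∀ i, len ≤ i → part i = 0

/-- `conj μ j = μ′_{j+1}`, the length of the `(j+1)`-th column (0-indexed). -/
def YD.conj (μ : YD) (j : ℕ) : ℕ :=
  ((Finset.range μ.len).filter (fun i => j < μ.part i)).card

/-- The empty Young diagram. -/
def emptyYD : YD where
  part := fun _ => 0
  len := 0
  anti := fun _ _ _ => le_refl 0
  zero := fun _ _ => rfl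

/-- The rectangular Young diagram `(m^a)` with `a` rows of length `m`. -/
def rect (m a : ℕ) : YD where
  part := fun i => if i < a then m else 0
  len := a
  anti := by intro i j hij; split_ifs <;> omega
  zero := by intro i hi; rw [if_neg (by omega)]

/-- `μ + (c^k)`: add `c` columns to the first `k` rows. -/
def muPlus (mu : YD) (c k : ℕ) : YD where
  part := fun i => if i < k then mu.part i + c else mu.part i
  len := max mu.len k
  anti := by
    intro i j hij
    have h := mu.anti hij
    split_ifs <;> omega
  zero := by
    intro i hi
    have h1 : mu.len ≤ i := le_trans (le_max_left _ _) hi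
    have h2 : k ≤ i := le_trans (le_max_right _ _) hi
    rw [if_neg (by omega), mu.zero i h1]

/-- The first `k` rows `(μ₁,…,μ_k)` of `μ`. -/
def truncate (mu : YD) (k : ℕ) : YD where
  part := fun i => if i < k then mu.part i else 0
  len := min mu.len k
  anti := by
    intro i j hij
    have h := mu.anti hij
    split_ifs <;> omega
  zero := by
    intro i hi
    split_ifs with h
    · exact mu.zero i (by omega)
    · rfl

/-- The rows of `μ` below the `k`-th one: `(μ_{k+1}, μ_{k+2}, …)`. -/
def shiftRows (mu : YD) (k : ℕ) : YD where
  part := fun i => mu.part (i + k)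
  len := mu.len - k
  anti := fun i j hij => mu.anti (by omega)
  zero := fun i hi => mu.zero (i + k) (by omega)

/-- The cells of a skew Young diagram `λ ⊂ μ`, in (1-indexed) matrix coordinates:
`(i,j)` with `1 ≤ i`, `λ_i < j ≤ μ_i`. -/
def cells (lam mu : YD) : Finset (ℕ × ℕ) :=
  (Finset.Icc 1 mu.len ×ˢ Finset.Icc 1 (mu.part 0)).filter
    (fun p => lam.part (p.1 - 1) < p.2 ∧ p.2 ≤ mu.part (p.1 - 1))

abbrev Cell (lam mu : YD) := {x : ℕ × ℕ // x ∈ cells lam mu}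

/-- A tableau on the skew diagram `λ ⊂ μ`: an assignment of an element of
`J = {1,…,r+s+2}` (encoded by `Fin (r+s+2)`) to every cell. -/
abbrev Tab (r s : ℕ) (lam mu : YD) := Cell lam mu → Fin (r + s + 2)

/-- The entry of a tableau at a cell, as an element of `J = {1,…,r+s+2}`. -/
def entry {lam mu : YD} (t : Tab r s lam mu) (p : Cell lam mu) : ℕ := (t p).1 + 1

/-- Admissibility of a tableau: entries weakly increase along rows and down columns,
two equal adjacent entries in a row must lie in `J₊ = {1,…,r+1}`, and two equal adjacent
entries in a column must lie in `J₋ = {r+2,…,r+s+2}`. -/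
def Adm (r s : ℕ) (lam mu : YD) (t : Tab r s lam mu) : Prop :=
  ∀ p q : Cell lam mu,
    (q.1.1 = p.1.1 ∧ q.1.2 = p.1.2 + 1 →
      entry t p ≤ entry t q ∧ (entry t p = entry t q → entry t p ≤ r + 1)) ∧
    (q.1.1 = p.1.1 + 1 ∧ q.1.2 = p.1.2 →
      entry t p ≤ entry t q ∧ (entry t p = entry t q → r + 2 ≤ entry t p))

open Classical in
/-- The dressed vacuum form `T_{λ⊂μ}(u)`:
`∑_{admissible b} ∏_{(i,j)} (−1)^{p(b(i,j))} z(b(i,j); u − μ₁ + μ₁′ − 2i + 2j)`. -/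
noncomputable def Tfun (S : Setup r s) (lam mu : YD) (u : ℂ) : ℂ :=
  ∑ t : Tab r s lam mu,
    if Adm r s lam mu t then
      ∏ p : Cell lam mu,
        (-1 : ℂ) ^ (if entry t p ≤ r + 1 then 0 else 1) *
          S.z (entry t p)
            (u - (mu.part 0 : ℂ) + (mu.conj 0 : ℂ) - 2 * (p.1.1 : ℂ) + 2 * (p.1.2 : ℂ))
    else 0

/-- Admissibility with all entries restricted to `J₋ = {r+2,…,r+s+2}`. -/
def AdmH (r s : ℕ) (nu : YD) (t : Tab r s emptyYD nu) : Prop :=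
  Adm r s emptyYD nu t ∧ ∀ p : Cell emptyYD nu, r + 2 ≤ entry t p

open Classical in
/-- `H_ν(u)`: the same tableau sum as `T_ν(u)`, restricted to tableaux with all
entries in `J₋`. -/
noncomputable def Hfun (S : Setup r s) (nu : YD) (u : ℂ) : ℂ :=
  ∑ t : Tab r s emptyYD nu,
    if AdmH r s nu t then
      ∏ p : Cell emptyYD nu,
        (-1 : ℂ) ^ (if entry t p ≤ r + 1 then 0 else 1) *
          S.z (entry t p)
            (u - (nu.part 0 : ℂ) + (nu.conj 0 : ℂ) - 2 * (p.1.1 : ℂ) + 2 * (p.1.2 : ℂ))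
    else 0

/-- The potential poles of `T_{λ⊂μ}`: the points where the `Q`-denominator of some
`z`-factor of some admissible summand vanishes (vacuum parts disregarded). -/
def PotPole (S : Setup r s) (lam mu : YD) : Set ℂ :=
  {p | ∃ t : Tab r s lam mu, Adm r s lam mu t ∧
    ∃ q : Cell lam mu,
      S.zDen (entry t q)
        (p - (mu.part 0 : ℂ) + (mu.conj 0 : ℂ) - 2 * (q.1.1 : ℂ) + 2 * (q.1.2 : ℂ)) = 0}

/-- The potential poles of `H_ν` (vacuum parts disregarded). -/
def PotPoleH (S : Setup r s) (nu : YD) : Set ℂ :=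
  {p | ∃ t : Tab r s emptyYD nu, AdmH r s nu t ∧
    ∃ q : Cell emptyYD nu,
      S.zDen (entry t q)
        (p - (nu.part 0 : ℂ) + (nu.conj 0 : ℂ) - 2 * (q.1.1 : ℂ) + 2 * (q.1.2 : ℂ)) = 0}

/-- The deformed dressed vacuum form `T̃_{μ;c}(u)` for `c ∈ ℂ`. -/
noncomputable def Ttilde (S : Setup r s) (mu : YD) (c : ℂ) (u : ℂ) : ℂ :=
  S.Q (r + 1) (u - c + (mu.conj 0 : ℂ) - (mu.part 0 : ℂ) - (r : ℂ) - 1) /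
    S.Q (r + 1) (u + c + (mu.conj 0 : ℂ) - (mu.part 0 : ℂ) - (r : ℂ) - 1) *
    Tfun S emptyYD (truncate mu (r + 1)) (u + (mu.conj 0 : ℂ) + c - (r : ℂ) - 1) *
    Hfun S (shiftRows mu (r + 1))
      (u - (mu.part 0 : ℂ) + (mu.part (r + 1) : ℂ) - c - (r : ℂ) - 1)

/-- The potential poles of `T̃_{μ;c}` (vacuum parts disregarded). -/
def PotPoleTilde (S : Setup r s) (mu : YD) (c : ℂ) : Set ℂ :=
  {p | S.Q (r + 1) (p + c + (mu.conj 0 : ℂ) - (mu.part 0 : ℂ) - (r : ℂ) - 1) = 0 ∨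
    (p + (mu.conj 0 : ℂ) + c - (r : ℂ) - 1) ∈ PotPole S emptyYD (truncate mu (r + 1)) ∨
    (p - (mu.part 0 : ℂ) + (mu.part (r + 1) : ℂ) - c - (r : ℂ) - 1) ∈
      PotPoleH S (shiftRows mu (r + 1))}

/-- `T̃^{r+1}_{c+s+1}(u)` for `c ∈ ℂ`. -/
noncomputable def TtildeRect (S : Setup r s) (c : ℂ) (u : ℂ) : ℂ :=
  S.Q (r + 1) (u - c - (s : ℂ) - 1) / S.Q (r + 1) (u + c - (s : ℂ) - 1) *
    Tfun S emptyYD (rect (s + 1) (r + 1)) (u + c)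

/-- The potential poles of `T̃^{r+1}_{c+s+1}` (vacuum parts disregarded). -/
def PotPoleTildeRect (S : Setup r s) (c : ℂ) : Set ℂ :=
  {p | S.Q (r + 1) (p + c - (s : ℂ) - 1) = 0 ∨
       (p + c) ∈ PotPole S emptyYD (rect (s + 1) (r + 1))}

/-- `T^a(u) = T_{(1^a)}(u)` extended by the conventions `T^0 = 1`, `T^a = 0` for `a < 0`. -/
noncomputable def Tcol (S : Setup r s) (a : ℤ) (u : ℂ) : ℂ :=
  if a < 0 then 0 else if a = 0 then 1 else Tfun S emptyYD (rect 1 a.toNat) u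

/-- `T_m^1(u) = T_{(m)}(u)` extended by the conventions `T_0^1 = 1`, `T_m^1 = 0` for `m < 0`. -/
noncomputable def Trow (S : Setup r s) (m : ℤ) (u : ℂ) : ℂ :=
  if m < 0 then 0 else if m = 0 then 1 else Tfun S emptyYD (rect m.toNat 1) u

/-- `H_1^a(u) = H_{(1^a)}(u)` extended by the conventions `H_1^0 = 1`, `H_1^a = 0` for `a < 0`. -/
noncomputable def Hcol (S : Setup r s) (a : ℤ) (u : ℂ) : ℂ :=
  if a < 0 then 0 else if a = 0 then 1 else Hfun S (rect 1 a.toNat) u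

/-!
Writing `v = u + d`, the two terms share the denominator `Q_d(v)`:
`z(d;u) + z(d+1;u) = G(v) / Q_d(v)` with `G = pairNumerator d`,
`G(v) = Q_{d-1}(v+1) Q_d(v-2) / Q_{d-1}(v-1) + Q_d(v+2) Q_{d+1}(v-1) / Q_{d+1}(v+1)`,
which is regular at a Bethe root `x` of color `d`. Since `x` is a simple zero of `Q_d`,
the residue is `G(x) / Q_d'(x)`, and `G(x) = 0` is exactly the Bethe ansatz equation at `x`:
for a bosonic node `d ≤ r` only the neighbouring colors `d - 1, d, d + 1` contribute to it.
-/

theorem HasDerivAt.tendsto_sub_mul_div_nhdsNE_zero {𝕜 : Type*} [NontriviallyNormedField 𝕜]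
    {f g : 𝕜 → 𝕜} {x f' : 𝕜} (hf : HasDerivAt f f' x) (hfx : f x = 0) (hf' : f' ≠ 0)
    (hg : ContinuousAt g x) (hgx : g x = 0) :
    Tendsto (fun v => (v - x) * (g v / f v)) (𝓝[≠] x) (𝓝 0) := by
  have hslope : Tendsto (fun v => ((f v - f x) / (v - x))⁻¹) (𝓝[≠] x) (𝓝 f'⁻¹) := by
    simpa only [slope_def_field] using (hasDerivAt_iff_tendsto_slope.mp hf).inv₀ hf'
  have hlim := hslope.mul (hgx ▸ hg.tendsto.mono_left nhdsWithin_le_nhds)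
  rw [mul_zero] at hlim
  refine hlim.congr fun v => ?_
  rw [hfx, sub_zero, inv_div]
  ring

theorem Finset.prod_div_self_eq_zero_or_one {ι K : Type*} [Field K] (s : Finset ι) (f : ι → K) :
    ∏ i ∈ s, f i / f i = 0 ∨ ∏ i ∈ s, f i / f i = 1 := by
  by_cases h : ∀ i ∈ s, f i ≠ 0
  · exact Or.inr (Finset.prod_eq_one fun i hi => div_self (h i hi))
  · push Not at h
    obtain ⟨i, hi, hfi⟩ := h
    exact Or.inl (Finset.prod_eq_zero hi (by rw [hfi, div_zero]))

theorem Finset.prod_range_eq_of_eq_one_off_three {M : Type*} [CommMonoid M] {g : ℕ → M}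
    {n d : ℕ} (hd : 1 ≤ d) (hdn : d + 1 < n)
    (hg : ∀ c < n, c ≠ d - 1 → c ≠ d → c ≠ d + 1 → g c = 1) :
    ∏ c ∈ Finset.range n, g c = g (d - 1) * g d * g (d + 1) := by
  have hsub : ({d - 1, d, d + 1} : Finset ℕ) ⊆ Finset.range n := by
    intro c hc
    simp only [Finset.mem_insert, Finset.mem_singleton] at hc
    rw [Finset.mem_range]
    omega
  rw [← Finset.prod_subset hsub, Finset.prod_insert (by simp; omega),
    Finset.prod_insert (by simp), Finset.prod_singleton, mul_assoc]
  intro c hc hc'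
  simp only [Finset.mem_insert, Finset.mem_singleton, not_or] at hc'
  exact hg c (Finset.mem_range.mp hc) hc'.1 hc'.2.1 hc'.2.2

theorem cartan_self {r d : ℕ} (hd : d ≤ r) : cartan r d d = 2 := by
  simp [cartan, hd]

theorem cartan_succ {r d : ℕ} (hd : d ≤ r) : cartan r d (d + 1) = -1 := by
  simp [cartan, hd]

theorem cartan_pred {r d : ℕ} (hd1 : 1 ≤ d) (hd : d ≤ r) : cartan r d (d - 1) = -1 := by
  simp only [cartan]
  split_ifs <;> omega

theorem cartan_eq_zero {r d c : ℕ} (h1 : c ≠ d - 1) (h2 : c ≠ d) (h3 : c ≠ d + 1) :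
    cartan r d c = 0 := by
  simp only [cartan]
  split_ifs <;> omega

namespace Setup

variable {S : Setup r s}

theorem Q_zero (u : ℂ) : S.Q 0 u = 1 := by
  simp [Setup.Q]

theorem differentiable_Q (a : ℕ) : Differentiable ℂ (S.Q a) := by
  unfold Setup.Q Setup.br
  split <;> fun_prop

@[fun_prop]
theorem continuous_Q (a : ℕ) : Continuous (S.Q a) :=
  (differentiable_Q a).continuous

theorem Q_root_eq_zero (a : Fin (r + s + 1)) (k : Fin (S.Nb a)) {d : ℕ} (had : a.1 + 1 = d) :
    S.Q d (S.root a k) = 0 := by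
  subst had
  rw [Setup.Q, dif_pos ⟨le_add_self, a.2⟩]
  exact Finset.prod_eq_zero (Finset.mem_univ k) (by simp [Setup.br])

theorem Generic.Q_root_add_ne_zero (hGen : S.Generic) (a : Fin (r + s + 1))
    (k : Fin (S.Nb a)) {b : ℕ} (hb : b ≤ r + s + 1) {m : ℤ} (h : b ≠ a.1 + 1 ∨ m ≠ 0) :
    S.Q b (S.root a k + m) ≠ 0 := by
  rcases b.eq_zero_or_pos with rfl | hb0
  · simp [Q_zero]
  · exact hGen.2 a k b m hb0 hb h

theorem Generic.Q_root_add_sub_ne_zero (hGen : S.Generic) (a : Fin (r + s + 1))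
    (k : Fin (S.Nb a)) {b : ℕ} (hb : b ≤ r + s + 1) {m : ℕ} (hm : m ≠ 0) :
    S.Q b (S.root a k + m) ≠ 0 ∧ S.Q b (S.root a k - m) ≠ 0 :=
  ⟨by simpa using hGen.Q_root_add_ne_zero a k hb (m := m) (Or.inr (by omega)),
    by simpa [sub_eq_add_neg] using hGen.Q_root_add_ne_zero a k hb (m := -m) (Or.inr (by omega))⟩

noncomputable def pairNumerator (S : Setup r s) (d : ℕ) (v : ℂ) : ℂ :=
  S.Q (d - 1) (v + 1) * S.Q d (v - 2) / S.Q (d - 1) (v - 1) +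
    S.Q d (v + 2) * S.Q (d + 1) (v - 1) / S.Q (d + 1) (v + 1)

theorem z_add_z_succ {d : ℕ} (hd : d ≤ r) (u : ℂ) :
    S.z d u + S.z (d + 1) u = S.pairNumerator d (u + d) / S.Q d (u + d) := by
  simp only [Setup.z, if_pos (show d ≤ r + 1 by omega), if_pos (show d + 1 ≤ r + 1 by omega),
    Setup.psi, Nat.add_sub_cancel, Nat.cast_add, Nat.cast_one, one_mul]
  rw [show u + ((d : ℂ) + 1) + 1 = u + d + 2 by ring, show u + ((d : ℂ) + 1) - 2 = u + d - 1 by ring,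
    show u + ((d : ℂ) + 1) - 1 = u + d by ring, show u + ((d : ℂ) + 1) = u + d + 1 by ring,
    pairNumerator, add_div, div_div, div_div, mul_comm (S.Q (d + 1) _)]

theorem continuousAt_pairNumerator {d : ℕ} {v : ℂ} (h₁ : S.Q (d - 1) (v - 1) ≠ 0)
    (h₂ : S.Q (d + 1) (v + 1) ≠ 0) : ContinuousAt (S.pairNumerator d) v := by
  unfold pairNumerator
  fun_prop (disch := assumption)

theorem Generic.prod_cartan_ratio (hGen : S.Generic) (a : Fin (r + s + 1)) (k : Fin (S.Nb a))
    {d : ℕ} (had : a.1 + 1 = d) (hd : d ≤ r) :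
    ∏ b : Fin (r + s + 1), S.Q (b.1 + 1) (S.root a k + (cartan r d (b.1 + 1) : ℂ)) /
        S.Q (b.1 + 1) (S.root a k - (cartan r d (b.1 + 1) : ℂ)) =
      S.Q (d - 1) (S.root a k - 1) / S.Q (d - 1) (S.root a k + 1) *
        (S.Q d (S.root a k + 2) / S.Q d (S.root a k - 2)) *
        (S.Q (d + 1) (S.root a k - 1) / S.Q (d + 1) (S.root a k + 1)) := by
  set x := S.root a k
  set g : ℕ → ℂ := fun c => S.Q c (x + cartan r d c) / S.Q c (x - cartan r d c)
  have hg : ∀ c < r + s + 2, c ≠ d - 1 → c ≠ d → c ≠ d + 1 → g c = 1 := by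
    intro c hc h₁ h₂ h₃
    have hQ : S.Q c x ≠ 0 := by
      simpa using hGen.Q_root_add_ne_zero a k (m := 0) (by omega) (Or.inl (by omega))
    simp [g, cartan_eq_zero h₁ h₂ h₃, hQ]
  calc ∏ b : Fin (r + s + 1), g (b.1 + 1) = ∏ c ∈ Finset.range (r + s + 2), g c := by
        rw [Fin.prod_univ_eq_prod_range (fun i => g (i + 1)), Finset.prod_range_succ' g]
        simp [g, Q_zero]
    _ = g (d - 1) * g d * g (d + 1) :=
        Finset.prod_range_eq_of_eq_one_off_three (by omega) (by omega) hg
    _ = _ := by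
        simp only [g, cartan_pred (show 1 ≤ d by omega) hd, cartan_self hd, cartan_succ hd]
        push_cast
        simp only [← sub_eq_add_neg, sub_neg_eq_add]

theorem BAE.pairNumerator_root_eq_zero (hBAE : S.BAE) (hGen : S.Generic)
    (a : Fin (r + s + 1)) (k : Fin (S.Nb a)) {d : ℕ} (had : a.1 + 1 = d) (hd : d ≤ r) :
    S.pairNumerator d (S.root a k) = 0 := by
  obtain ⟨hA, hA'⟩ := hGen.Q_root_add_sub_ne_zero a k (b := d - 1) (by omega) one_ne_zero
  obtain ⟨hB', hB⟩ := hGen.Q_root_add_sub_ne_zero a k (b := d) (by omega) two_ne_zero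
  obtain ⟨hC, hC'⟩ := hGen.Q_root_add_sub_ne_zero a k (b := d + 1) (by omega) one_ne_zero
  push_cast at hA hA' hB hB' hC hC'
  have hbae := hBAE a k
  rw [had, hGen.prod_cartan_ratio a k had hd] at hbae
  simp only [if_neg (show d ≠ r + 1 by omega), if_pos (show d ≤ r + 1 by omega), zero_mul,
    zero_div, add_zero, sub_zero, pow_zero, one_mul] at hbae
  have hratio : S.Q (d - 1) (S.root a k - 1) / S.Q (d - 1) (S.root a k + 1) *
      (S.Q d (S.root a k + 2) / S.Q d (S.root a k - 2)) *
      (S.Q (d + 1) (S.root a k - 1) / S.Q (d + 1) (S.root a k + 1)) = -1 := by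
    -- Each factor `[x - w_j] / [x - w_j]` is `1`, or `0` by the convention `y / 0 = 0`.
    rcases Finset.prod_div_self_eq_zero_or_one Finset.univ
      (fun j => S.br (S.root a k - S.w j)) with h | h
    · rw [h, neg_zero] at hbae
      exact absurd hbae.symm (mul_ne_zero (mul_ne_zero (div_ne_zero hA' hA)
        (div_ne_zero hB' hB)) (div_ne_zero hC' hC))
    · rw [h] at hbae
      exact hbae.symm
  rw [pairNumerator]
  field_simp at hratio ⊢
  linear_combination hratio

end Setup

/-- Residue cancellation at colors `1,…,r`.  Assume the Bethe ansatz
equations hold (Bethe roots generic).  Then for every `d` with `1 ≤ d ≤ r` and every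
`k ∈ {1,…,N_d}`, the residue of `z(d;u) + z(d+1;u)` at `u = −d + u_k^{(d)}` vanishes:
`lim_{u → −d + u_k^{(d)}} (u + d − u_k^{(d)})·(z(d;u) + z(d+1;u)) = 0`. -/
theorem residue_cancellation_low (r s : ℕ) (S : Setup r s)
    (hBAE : S.BAE) (hGen : S.Generic)
    (d : ℕ) (hd1 : 1 ≤ d) (hd2 : d ≤ r)
    (k : Fin (S.Nb ⟨d - 1, by omega⟩)) :
    Filter.Tendsto
      (fun u : ℂ => (u + (d : ℂ) - S.root ⟨d - 1, by omega⟩ k) *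
        (S.z d u + S.z (d + 1) u))
      (𝓝[≠] (-(d : ℂ) + S.root ⟨d - 1, by omega⟩ k)) (𝓝 0) := by
  have had : d - 1 + 1 = d := Nat.sub_add_cancel hd1
  set x := S.root _ k
  have hA' := (hGen.Q_root_add_sub_ne_zero _ k (b := d - 1) (by omega) one_ne_zero).2
  have hC := (hGen.Q_root_add_sub_ne_zero _ k (b := d + 1) (by omega) one_ne_zero).1
  push_cast at hA' hC
  have hres : Tendsto (fun v => (v - x) * (S.pairNumerator d v / S.Q d v)) (𝓝[≠] x) (𝓝 0) :=
    HasDerivAt.tendsto_sub_mul_div_nhdsNE_zero (S.differentiable_Q d x).hasDerivAt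
      (S.Q_root_eq_zero _ k had) (by rw [← had]; exact hGen.1 _ k)
      (S.continuousAt_pairNumerator hA' hC) (hBAE.pairNumerator_root_eq_zero hGen _ k had hd2)
  have hshift : map (· + (d : ℂ)) (𝓝[≠] (-d + x)) = 𝓝[≠] x := by simp
  rw [← hshift, tendsto_map'_iff] at hres
  refine hres.congr fun u => ?_
  rw [Function.comp_apply, S.z_add_z_succ hd2, add_sub_right_comm]

end AnalyticBethe
end

section
/- (Combinatorial step in the proof of Lemma 5, part 2) Let ν be a partition and let b be an admissible tableau on ν all of whose entries lie in J₋ = {r+2,…,r+s+2}. Then the set of cells of ν carrying the entry r+2 is exactly {(1,1),(2,1),…,(k,1)} for some k with 0 ≤ k ≤ ν₁′; that is, the entry r+2 appears only in the first column, consecutively from the top. -/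
open Complex Filter Topology

namespace AnalyticBethe

variable {r s : ℕ}

/-! Entries of an admissible tableau with values in `J₋` are at least `r+2`; since two equal
entries of `J₋` cannot be neighbours in a row, rows increase strictly and the minimal value
`r+2` can only sit in the first column. Down that column entries weakly increase, so the
cells carrying `r+2` form an initial segment of it. -/

theorem mem_cells_emptyYD {nu : YD} {p : ℕ × ℕ} :
    p ∈ cells emptyYD nu ↔ 1 ≤ p.1 ∧ p.1 ≤ nu.len ∧ 1 ≤ p.2 ∧ p.2 ≤ nu.part (p.1 - 1) := by
  have hrow : nu.part (p.1 - 1) ≤ nu.part 0 := nu.anti (Nat.zero_le _)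
  rw [cells, Finset.mem_filter, Finset.mem_product, Finset.mem_Icc, Finset.mem_Icc]
  simp only [emptyYD]
  omega

theorem mem_cells_emptyYD_of_succ_fst {nu : YD} {i j : ℕ} (hi : 1 ≤ i)
    (h : (i + 1, j) ∈ cells emptyYD nu) : (i, j) ∈ cells emptyYD nu := by
  have hrow : nu.part i ≤ nu.part (i - 1) := nu.anti (Nat.sub_le i 1)
  rw [mem_cells_emptyYD] at h ⊢
  simp only [Nat.add_sub_cancel] at h ⊢
  omega

theorem mem_cells_emptyYD_of_succ_snd {nu : YD} {i j : ℕ} (hj : 1 ≤ j)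
    (h : (i, j + 1) ∈ cells emptyYD nu) : (i, j) ∈ cells emptyYD nu := by
  rw [mem_cells_emptyYD] at h ⊢
  dsimp only at h ⊢
  omega

theorem le_conj_of_mem_cells_emptyYD {nu : YD} {p : ℕ × ℕ} (h : p ∈ cells emptyYD nu) :
    p.1 ≤ nu.conj (p.2 - 1) := by
  rw [mem_cells_emptyYD] at h
  have hsub : Finset.range p.1 ⊆ (Finset.range nu.len).filter (fun i => p.2 - 1 < nu.part i) := by
    intro i hi
    rw [Finset.mem_range] at hi
    have hrow : nu.part (p.1 - 1) ≤ nu.part i := nu.anti (by omega)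
    simp only [Finset.mem_filter, Finset.mem_range]
    omega
  simpa [YD.conj] using Finset.card_le_card hsub

namespace Adm

variable {nu : YD} {t : Tab r s emptyYD nu}

theorem entry_le_of_le_fst (ht : Adm r s emptyYD nu t) {i i' j : ℕ}
    (hp : (i, j) ∈ cells emptyYD nu) (hq : (i', j) ∈ cells emptyYD nu) (hii' : i ≤ i') :
    entry t ⟨_, hp⟩ ≤ entry t ⟨_, hq⟩ := by
  induction i', hii' using Nat.le_induction with
  | base => exact le_rfl
  | succ n hin ih =>
    have hi : 1 ≤ i := (mem_cells_emptyYD.1 hp).1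
    have hup := mem_cells_emptyYD_of_succ_fst (by omega) hq
    exact (ih hup).trans ((ht ⟨_, hup⟩ ⟨_, hq⟩).2 ⟨rfl, rfl⟩).1

theorem entry_lt_of_succ_snd (ht : Adm r s emptyYD nu t) {i j : ℕ}
    (hp : (i, j) ∈ cells emptyYD nu) (hq : (i, j + 1) ∈ cells emptyYD nu)
    (hlow : r + 2 ≤ entry t ⟨_, hp⟩) : entry t ⟨_, hp⟩ < entry t ⟨_, hq⟩ := by
  obtain ⟨hle, hne⟩ := (ht ⟨_, hp⟩ ⟨_, hq⟩).1 ⟨rfl, rfl⟩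
  exact lt_of_le_of_ne hle fun heq => by have := hne heq; omega

theorem snd_eq_one_of_entry_eq (ht : Adm r s emptyYD nu t)
    (hJm : ∀ q : Cell emptyYD nu, r + 2 ≤ entry t q) {q : Cell emptyYD nu}
    (hq : entry t q = r + 2) : q.1.2 = 1 := by
  obtain ⟨⟨i, j⟩, hmem⟩ := q
  show j = 1
  have hj : 1 ≤ j := (mem_cells_emptyYD.1 hmem).2.2.1
  by_contra hj1
  obtain ⟨j, rfl⟩ : ∃ j', j = j' + 1 := ⟨j - 1, by omega⟩
  have hleft := mem_cells_emptyYD_of_succ_snd (by omega) hmem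
  have hlow := hJm ⟨_, hleft⟩
  have hlt := ht.entry_lt_of_succ_snd hleft hmem hlow
  omega

end Adm

/-- combinatorial step in the proof of Lemma 5, part 2: if `b` is an
admissible tableau on a partition `ν` all of whose entries lie in `J₋`, then the cells
carrying the entry `r+2` are exactly `{(1,1),…,(k,1)}` for some `0 ≤ k ≤ ν₁′`:
the entry `r+2` appears only in the first column, consecutively from the top. -/
theorem rPlus2_first_column (r s : ℕ) (nu : YD)
    (t : Tab r s emptyYD nu) (ht : Adm r s emptyYD nu t)
    (hJm : ∀ q : Cell emptyYD nu, r + 2 ≤ entry t q) :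
    ∃ k : ℕ, k ≤ nu.conj 0 ∧
      ∀ q : Cell emptyYD nu, entry t q = r + 2 ↔ (q.1.2 = 1 ∧ q.1.1 ≤ k) := by
  classical
  let carriesMin : ℕ → Prop := fun i => ∃ h : (i, 1) ∈ cells emptyYD nu, entry t ⟨_, h⟩ = r + 2
  let k := Nat.findGreatest carriesMin nu.len
  have hk : k ≠ 0 → carriesMin k := Nat.findGreatest_of_ne_zero rfl
  refine ⟨k, ?_, ?_⟩
  · by_cases hk0 : k = 0
    · rw [hk0]
      exact Nat.zero_le _
    · exact le_conj_of_mem_cells_emptyYD (hk hk0).1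
  rintro ⟨⟨i, j⟩, hq⟩
  have hcell := mem_cells_emptyYD.1 hq
  constructor
  · intro he
    obtain rfl : j = 1 := ht.snd_eq_one_of_entry_eq hJm he
    exact ⟨rfl, Nat.le_findGreatest hcell.2.1 ⟨hq, he⟩⟩
  · rintro ⟨rfl, hik⟩
    obtain ⟨hkmem, hke⟩ := hk (by simp only at hik hcell; omega)
    have hle := ht.entry_le_of_le_fst hq hkmem hik
    have hlow := hJm ⟨_, hq⟩
    omega

end AnalyticBethe
end

section
/- (Rigidity of admissible tableaux on μ+(c^{r+1})) Let μ be a partition with μ₁′ ≥ r+1 and μ_{r+1} ≥ s+1, let c ∈ ℤ_{≥1}, and set μ+(c^{r+1}) = (μ₁+c, …, μ_{r+1}+c, μ_{r+2}, …, μ_{μ₁′}). Then every admissible tableau b on the Young diagram of μ+(c^{r+1}) satisfies: b(i,j) = i for all 1 ≤ i ≤ r+1 and 1 ≤ j ≤ c, and b(i,j) ∈ J₋ for all r+2 ≤ i ≤ μ₁′ and 1 ≤ j ≤ μ_i. -/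
open Complex Filter Topology

namespace AnalyticBethe

variable {r s : ℕ}

/-!
Down a column of an admissible tableau the entries strictly increase until they reach `J₋`,
and along a row the entries of `J₋` strictly increase. Since `1` is the least entry, the cell
`(i, j)` carries at least `min i (r + 2)`, which settles the rows below `r + 1`. If some
`(i, j)` with `i ≤ r + 1` carried more than `i`, column `j` would already be in `J₋` at row
`r + 1`; but row `r + 1` has `μ_{r+1} + c ≥ j + s + 1` cells, so it would need `s + 2`
distinct entries of `J₋`, which has only `s + 1`.
-/

@[simp]
lemma emptyYD_part (i : ℕ) : emptyYD.part i = 0 := rfl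

@[simp]
lemma muPlus_part (mu : YD) (c k i : ℕ) :
    (muPlus mu c k).part i = if i < k then mu.part i + c else mu.part i := rfl

lemma mem_cells_iff {lam mu : YD} {i j : ℕ} :
    (i, j) ∈ cells lam mu ↔ 1 ≤ i ∧ lam.part (i - 1) < j ∧ j ≤ mu.part (i - 1) := by
  simp only [cells, Finset.mem_filter, Finset.mem_product, Finset.mem_Icc]
  constructor
  · rintro ⟨⟨⟨hi, -⟩, -⟩, hlam, hmu⟩
    exact ⟨hi, hlam, hmu⟩
  · rintro ⟨hi, hlam, hmu⟩
    have hlen : i ≤ mu.len := by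
      by_contra! h
      have := mu.zero (i - 1) (by omega)
      omega
    exact ⟨⟨⟨hi, hlen⟩, by omega, hmu.trans (mu.anti (Nat.zero_le _))⟩, hlam, hmu⟩

section Convexity

variable {lam mu : YD} {i j : ℕ}

lemma mem_cells_of_mem_col {i' n : ℕ} (hp : (i, j) ∈ cells lam mu)
    (hq : (i', j) ∈ cells lam mu) (hin : i ≤ n) (hni : n ≤ i') : (n, j) ∈ cells lam mu := by
  rw [mem_cells_iff] at *
  exact ⟨by omega, (lam.anti (by omega)).trans_lt hp.2.1, hq.2.2.trans (mu.anti (by omega))⟩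

lemma mem_cells_of_mem_row {j' n : ℕ} (hp : (i, j) ∈ cells lam mu)
    (hq : (i, j') ∈ cells lam mu) (hjn : j ≤ n) (hnj : n ≤ j') : (i, n) ∈ cells lam mu := by
  rw [mem_cells_iff] at *
  exact ⟨hp.1, by omega, by omega⟩

end Convexity

lemma entry_le {lam mu : YD} (t : Tab r s lam mu) (p : Cell lam mu) : entry t p ≤ r + s + 2 :=
  (t p).isLt

section Skew

variable {lam mu : YD} {t : Tab r s lam mu}

lemma Adm.min_add_le_entry_col (ht : Adm r s lam mu t) {i i' j : ℕ} (hii : i ≤ i')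
    (hp : (i, j) ∈ cells lam mu) (hq : (i', j) ∈ cells lam mu) :
    min (entry t ⟨_, hp⟩ + (i' - i)) (r + 2) ≤ entry t ⟨_, hq⟩ := by
  induction i', hii using Nat.le_induction with
  | base => omega
  | succ n hin ih =>
    have hn := mem_cells_of_mem_col hp hq hin n.le_succ
    obtain ⟨hle, heq⟩ := (ht ⟨_, hn⟩ ⟨_, hq⟩).2 ⟨rfl, rfl⟩
    have := ih hn
    rcases hle.eq_or_lt with h | h
    · have := heq h
      omega
    · omega

lemma Adm.add_le_entry_row (ht : Adm r s lam mu t) {i j j' : ℕ} (hjj : j ≤ j')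
    (hp : (i, j) ∈ cells lam mu) (hq : (i, j') ∈ cells lam mu)
    (hminus : r + 2 ≤ entry t ⟨_, hp⟩) :
    entry t ⟨_, hp⟩ + (j' - j) ≤ entry t ⟨_, hq⟩ := by
  induction j', hjj using Nat.le_induction with
  | base => omega
  | succ n hjn ih =>
    have hn := mem_cells_of_mem_row hp hq hjn n.le_succ
    obtain ⟨hle, heq⟩ := (ht ⟨_, hn⟩ ⟨_, hq⟩).1 ⟨rfl, rfl⟩
    have := ih hn
    rcases hle.eq_or_lt with h | h
    · have := heq h
      omega
    · omega

lemma Adm.not_mem_cells_of_le_entry (ht : Adm r s lam mu t) {i j : ℕ}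
    (hp : (i, j) ∈ cells lam mu) (hminus : r + 2 ≤ entry t ⟨_, hp⟩) :
    (i, j + (s + 1)) ∉ cells lam mu := fun hq => by
  have := ht.add_le_entry_row (Nat.le_add_right j _) hp hq hminus
  have := entry_le t ⟨_, hq⟩
  omega

end Skew

section Straight

variable {nu : YD} {t : Tab r s emptyYD nu}

lemma Adm.min_le_entry (ht : Adm r s emptyYD nu t) {i j : ℕ}
    (hp : (i, j) ∈ cells emptyYD nu) : min i (r + 2) ≤ entry t ⟨_, hp⟩ := by
  have htop : (1, j) ∈ cells emptyYD nu := by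
    rw [mem_cells_iff] at *
    exact ⟨le_rfl, hp.2.1, hp.2.2.trans (nu.anti (Nat.zero_le _))⟩
  have := ht.min_add_le_entry_col (mem_cells_iff.1 hp).1 htop hp
  have : 1 ≤ entry t ⟨_, htop⟩ := Nat.le_add_left 1 _
  omega

lemma Adm.entry_eq_of_mem_cells (ht : Adm r s emptyYD nu t) {i j : ℕ}
    (hp : (i, j) ∈ cells emptyYD nu) (hir : i ≤ r + 1)
    (hend : (r + 1, j + (s + 1)) ∈ cells emptyYD nu) : entry t ⟨_, hp⟩ = i := by
  have hcorner : (r + 1, j) ∈ cells emptyYD nu := by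
    rw [mem_cells_iff] at *
    exact ⟨by omega, hp.2.1, by omega⟩
  have hlow := ht.min_le_entry hp
  have hcol := ht.min_add_le_entry_col hir hp hcorner
  by_contra hne
  exact ht.not_mem_cells_of_le_entry hcorner (by omega) hend

end Straight

theorem tableau_rigidity_general (r s : ℕ) (mu : YD)
    (h2 : s + 1 ≤ mu.part r)
    (c : ℕ)
    (t : Tab r s emptyYD (muPlus mu c (r + 1)))
    (ht : Adm r s emptyYD (muPlus mu c (r + 1)) t)
    (q : Cell emptyYD (muPlus mu c (r + 1))) :
    (q.1.1 ≤ r + 1 → q.1.2 ≤ c → entry t q = q.1.1) ∧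
    (r + 2 ≤ q.1.1 → r + 2 ≤ entry t q) := by
  obtain ⟨⟨i, j⟩, hq⟩ := q
  dsimp only
  refine ⟨fun hir hjc => ht.entry_eq_of_mem_cells hq hir ?_, fun hir => ?_⟩
  · rw [mem_cells_iff, muPlus_part, add_tsub_cancel_right, if_pos r.lt_succ_self]
    exact ⟨by omega, by simp, by omega⟩
  · have := ht.min_le_entry hq
    omega

/-- rigidity of admissible tableaux on `μ+(c^{r+1})`: let `μ` be a
partition with `μ₁′ ≥ r+1` and `μ_{r+1} ≥ s+1`, and let `c ≥ 1`.  Then every admissible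
tableau `b` on `μ+(c^{r+1})` satisfies `b(i,j) = i` for all `1 ≤ i ≤ r+1`, `1 ≤ j ≤ c`,
and `b(i,j) ∈ J₋` for all cells with `r+2 ≤ i ≤ μ₁′`. -/
theorem tableau_rigidity (r s : ℕ) (mu : YD)
    (h1 : r + 1 ≤ mu.conj 0) (h2 : s + 1 ≤ mu.part r)
    (c : ℕ) (hc : 1 ≤ c)
    (t : Tab r s emptyYD (muPlus mu c (r + 1)))
    (ht : Adm r s emptyYD (muPlus mu c (r + 1)) t)
    (q : Cell emptyYD (muPlus mu c (r + 1))) :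
    (q.1.1 ≤ r + 1 → q.1.2 ≤ c → entry t q = q.1.1) ∧
    (r + 2 ≤ q.1.1 → r + 2 ≤ entry t q) :=
  tableau_rigidity_general r s mu h2 c t ht q

end AnalyticBethe
end

section
/- (Functional relation in the continuous parameter) Let μ be a partition with μ₁′ ≥ r+1 and μ_{r+1} ≥ s+1. Then for all c, d ∈ ℂ and all u ∈ ℂ, T̃_{μ;c}(u − d)·T̃_{μ;c}(u + d) = T̃_{μ;c−d}(u)·T̃_{μ;c+d}(u). -/
open Complex Filter Topology

namespace AnalyticBethe

variable {r s : ℕ}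

theorem mul_eq_mul_of_eq_comp_sub_mul_comp_add {G M : Type*} [AddCommGroup G] [CommMonoid M]
    {f : G → G → M} (g h : G → M) (hf : ∀ c u, f c u = g (u - c) * h (u + c)) (c d u : G) :
    f c (u - d) * f c (u + d) = f (c - d) u * f (c + d) u := by
  simp only [hf]
  rw [show u - d - c = u - (c + d) by abel, show u - d + c = u + (c - d) by abel,
    show u + d - c = u - (c - d) by abel, show u + d + c = u + (c + d) by abel]
  ac_rfl

theorem Ttilde_eq_comp_sub_mul_comp_add (S : Setup r s) (mu : YD) :
    ∃ g h : ℂ → ℂ, ∀ c u, Ttilde S mu c u = g (u - c) * h (u + c) := by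
  set k : ℂ := (mu.conj 0 : ℂ) - (mu.part 0 : ℂ) - (r : ℂ) - 1
  refine ⟨fun x => S.Q (r + 1) (x + k) *
      Hfun S (shiftRows mu (r + 1)) (x - (mu.part 0 : ℂ) + (mu.part (r + 1) : ℂ) - (r : ℂ) - 1),
    fun y => (S.Q (r + 1) (y + k))⁻¹ *
      Tfun S emptyYD (truncate mu (r + 1)) (y + (mu.conj 0 : ℂ) - (r : ℂ) - 1),
    fun c u => ?_⟩
  simp only [Ttilde, k]
  ring_nf

theorem Ttilde_functional_relation_general (r s : ℕ) (S : Setup r s) (mu : YD)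
    (c d u : ℂ) :
    Ttilde S mu c (u - d) * Ttilde S mu c (u + d) =
      Ttilde S mu (c - d) u * Ttilde S mu (c + d) u := by
  obtain ⟨g, h, hgh⟩ := Ttilde_eq_comp_sub_mul_comp_add S mu
  exact mul_eq_mul_of_eq_comp_sub_mul_comp_add g h hgh c d u

/-- functional relation in the continuous parameter: let `μ` be a
partition with `μ₁′ ≥ r+1` and `μ_{r+1} ≥ s+1`.  Then for all `c, d, u ∈ ℂ`,
`T̃_{μ;c}(u − d)·T̃_{μ;c}(u + d) = T̃_{μ;c−d}(u)·T̃_{μ;c+d}(u)`. -/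
theorem Ttilde_functional_relation (r s : ℕ) (S : Setup r s) (mu : YD)
    (h1 : r + 1 ≤ mu.conj 0) (h2 : s + 1 ≤ mu.part r)
    (c d u : ℂ) :
    Ttilde S mu c (u - d) * Ttilde S mu c (u + d) =
      Ttilde S mu (c - d) u * Ttilde S mu (c + d) u :=
  Ttilde_functional_relation_general r s S mu c d u

end AnalyticBethe
end
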